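/- Let Σ and Q be nonempty finite sets with distinguished blank symbol □ ∈ Σ, and let δ = (δ₁,δ₂,δ₃) : Σ × Q → Σ × Q × {L,S,R} be a transition function. Suppose Y : ℤ → ℝ^Σ assigns to each u ∈ ℤ a probability vector Y(u) ∈ ΔΣ with Y(u) equal to the Dirac vector at □ for all but finitely many u, and S ∈ ΔQ is a probability vector. Define M(d) = Σ_{σ,q} [δ₃(σ,q)=d]·Y(0)_σ·S_q for d ∈ {L,S,R}, W(σ) = Σ_{σ',q} [δ₁(σ',q)=σ]·Y(0)_{σ'}·S_q, S'_q = Σ_{σ,q'} [δ₂(σ,q')=q]·Y(0)_σ·S_{q'}, and Y'(u)_σ = M(L)·([u≠1]·Y(u−1)_σ + [u=1]·W(σ)) + M(S)·([u≠0]·Y(u)_σ + [u=0]·W(σ)) + M(R)·([u≠−1]·Y(u+1)_σ + [u=−1]·W(σ)). Then M ∈ Δ{L,S,R}, W ∈ ΔΣ, S' ∈ ΔQ, each Y'(u) ∈ ΔΣ, and Y'(u) equals the Dirac vector at □ for all but finitely many u. Hence the smooth relaxation Δstep maps (ΔΣ)^{ℤ,□} × ΔQ to itself. -/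

import Mathlib

/-- The three possible motions of the Turing machine head: left, stay, right. -/
inductive Dir : Type
  | L | S | R
  deriving DecidableEq

instance : Fintype Dir :=
  ⟨{Dir.L, Dir.S, Dir.R}, fun d => by cases d <;> simp⟩

/-- The Dirac (one-hot) probability vector at `x₀ ∈ X`. -/
def dirac {X : Type*} [DecidableEq X] (x₀ : X) : X → ℝ :=
  fun x => if x = x₀ then 1 else 0

/-- `p` is a probability vector on the finite set `X`. -/
def IsProbVec {X : Type*} [Fintype X] (p : X → ℝ) : Prop :=
  (∀ x, 0 ≤ p x) ∧ ∑ x, p x = 1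

/-!
`M`, `W` and `S'` are pushforwards of the product distribution `Y 0 ⊗ S` along the three
components of `δ`, hence probability vectors. Each `Y' u` is a convex combination, with weights
`M`, of three probability vectors: cells of the tape shifted by the head move, with `W` written
at the old head cell.
Away from `u ∈ {-1, 0, 1}` the new cell only mixes the old cells `u - 1, u, u + 1`, so it is blank
whenever those are, and the blank-cofinite condition survives.
-/

lemma Dir.sum_univ {M : Type*} [AddCommMonoid M] (f : Dir → M) :
    ∑ d, f d = f Dir.L + f Dir.S + f Dir.R := by
  change ∑ d ∈ {Dir.L, Dir.S, Dir.R}, f d = _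
  simp [add_assoc]

lemma IsProbVec.pushforward_prod {A Q X : Type*} [Fintype A] [Fintype Q] [Fintype X]
    [DecidableEq X] (f : A × Q → X) {p : A → ℝ} {q : Q → ℝ}
    (hp : IsProbVec p) (hq : IsProbVec q) :
    IsProbVec fun x => ∑ a, ∑ r, (if f (a, r) = x then (1 : ℝ) else 0) * p a * q r := by
  refine ⟨fun x => ?_, ?_⟩
  · exact Finset.sum_nonneg fun a _ => Finset.sum_nonneg fun r _ =>
      mul_nonneg (mul_nonneg (ite_nonneg zero_le_one le_rfl) (hp.1 a)) (hq.1 r)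
  · calc ∑ x, ∑ a, ∑ r, (if f (a, r) = x then (1 : ℝ) else 0) * p a * q r
        = ∑ a, ∑ r, (∑ x, if f (a, r) = x then (1 : ℝ) else 0) * p a * q r := by
          simp only [Finset.sum_mul]
          rw [Finset.sum_comm]
          exact Finset.sum_congr rfl fun a _ => Finset.sum_comm
      _ = (∑ a, p a) * ∑ r, q r := by simp [Finset.sum_mul_sum]
      _ = 1 := by rw [hp.2, hq.2, one_mul]

lemma IsProbVec.select {X ι : Type*} [Fintype X] [DecidableEq ι] (i j : ι) {p q : X → ℝ}
    (hp : IsProbVec p) (hq : IsProbVec q) :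
    IsProbVec fun x =>
      (if i ≠ j then (1 : ℝ) else 0) * p x + (if i = j then (1 : ℝ) else 0) * q x := by
  by_cases h : i = j <;> simpa [h]

lemma IsProbVec.mix_dir {X : Type*} [Fintype X] {w : Dir → ℝ} {pL pS pR : X → ℝ}
    (hw : IsProbVec w) (hL : IsProbVec pL) (hS : IsProbVec pS) (hR : IsProbVec pR) :
    IsProbVec fun x => w Dir.L * pL x + w Dir.S * pS x + w Dir.R * pR x := by
  refine ⟨fun x => ?_, ?_⟩
  · exact add_nonneg (add_nonneg (mul_nonneg (hw.1 _) (hL.1 x)) (mul_nonneg (hw.1 _) (hS.1 x)))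
      (mul_nonneg (hw.1 _) (hR.1 x))
  · simp only [Finset.sum_add_distrib, ← Finset.mul_sum, hL.2, hS.2, hR.2, mul_one]
    rw [← Dir.sum_univ, hw.2]

lemma finite_setOf_ne_of_local {β : Type*} {Y Y' : ℤ → β} {c : β}
    (hY : {u | Y u ≠ c}.Finite)
    (hlocal : ∀ u, u ∉ ({-1, 0, 1} : Set ℤ) → Y (u - 1) = c → Y u = c → Y (u + 1) = c → Y' u = c) :
    {u | Y' u ≠ c}.Finite := by
  have hshift : ∀ k : ℤ, ((· + k) ⁻¹' {u | Y u ≠ c}).Finite := fun k =>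
    hY.preimage (add_left_injective k).injOn
  refine ((Set.toFinite ({-1, 0, 1} : Set ℤ)).union
    (((hshift (-1)).union hY).union (hshift 1))).subset fun u hu => ?_
  by_contra hout
  simp only [Set.mem_union, Set.mem_preimage, Set.mem_ofPred_eq, not_or, not_not] at hout
  obtain ⟨hu0, ⟨hprev, hcur⟩, hnext⟩ := hout
  exact hu (hlocal u hu0 (by simpa [sub_eq_add_neg] using hprev) hcur hnext)

theorem stmt12_general {A Q : Type*} [Fintype A] [Fintype Q]
    [DecidableEq A] [DecidableEq Q]
    (blank : A) (δ : A × Q → A × Q × Dir)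
    (Y : ℤ → A → ℝ) (hY : ∀ u, IsProbVec (Y u))
    (hYfin : {u : ℤ | Y u ≠ dirac blank}.Finite)
    (Sv : Q → ℝ) (hS : IsProbVec Sv)
    (M : Dir → ℝ)
    (hM : ∀ d, M d = ∑ σ : A, ∑ q : Q,
      (if (δ (σ, q)).2.2 = d then (1 : ℝ) else 0) * Y 0 σ * Sv q)
    (W : A → ℝ)
    (hW : ∀ σ, W σ = ∑ σ' : A, ∑ q : Q,
      (if (δ (σ', q)).1 = σ then (1 : ℝ) else 0) * Y 0 σ' * Sv q)
    (S' : Q → ℝ)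
    (hS' : ∀ q, S' q = ∑ σ : A, ∑ q' : Q,
      (if (δ (σ, q')).2.1 = q then (1 : ℝ) else 0) * Y 0 σ * Sv q')
    (Y' : ℤ → A → ℝ)
    (hY' : ∀ u σ, Y' u σ =
      M Dir.L * ((if u ≠ 1 then (1 : ℝ) else 0) * Y (u - 1) σ
                  + (if u = 1 then (1 : ℝ) else 0) * W σ)
      + M Dir.S * ((if u ≠ 0 then (1 : ℝ) else 0) * Y u σ
                  + (if u = 0 then (1 : ℝ) else 0) * W σ)
      + M Dir.R * ((if u ≠ -1 then (1 : ℝ) else 0) * Y (u + 1) σ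
                  + (if u = -1 then (1 : ℝ) else 0) * W σ)) :
    IsProbVec M ∧ IsProbVec W ∧ IsProbVec S' ∧
    (∀ u, IsProbVec (Y' u)) ∧ {u : ℤ | Y' u ≠ dirac blank}.Finite := by
  have hMprob : IsProbVec M := funext hM ▸ (hY 0).pushforward_prod (fun p => (δ p).2.2) hS
  have hWprob : IsProbVec W := funext hW ▸ (hY 0).pushforward_prod (fun p => (δ p).1) hS
  have hY'prob : ∀ u, IsProbVec (Y' u) := fun u => funext (hY' u) ▸ hMprob.mix_dir
    ((hY _).select u 1 hWprob) ((hY _).select u 0 hWprob) ((hY _).select u (-1) hWprob)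
  refine ⟨hMprob, hWprob, funext hS' ▸ (hY 0).pushforward_prod (fun p => (δ p).2.1) hS,
    hY'prob, finite_setOf_ne_of_local hYfin fun u hu hprev hcur hnext => ?_⟩
  simp only [Set.mem_insert_iff, Set.mem_singleton_iff, not_or] at hu
  obtain ⟨hu₁, hu₀, hu_neg⟩ := hu
  have hMsum : M Dir.L + M Dir.S + M Dir.R = 1 := by rw [← Dir.sum_univ, hMprob.2]
  funext σ
  simp only [hY', hprev, hcur, hnext, hu₁, hu₀, hu_neg, ne_eq, not_false_eq_true, if_true, if_false]
  linear_combination dirac blank σ * hMsum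

/-- The smooth relaxation `Δstep` of a Turing machine `(Σ, Q, δ)` maps
`(ΔΣ)^{ℤ,□} × ΔQ` to itself: given a probability-vector tape `Y` (Dirac at the
blank symbol at all but finitely many positions) and a probability vector `S` on
states, the quantities `M`, `W`, `S'` and the new tape `Y'` defined by the
naive-Bayesian propagation formulas are probability vectors, and `Y'` is again
Dirac at the blank symbol at all but finitely many positions. -/
theorem stmt12 {A Q : Type*} [Fintype A] [Fintype Q] [Nonempty A] [Nonempty Q]
    [DecidableEq A] [DecidableEq Q]
    (blank : A) (δ : A × Q → A × Q × Dir)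
    (Y : ℤ → A → ℝ) (hY : ∀ u, IsProbVec (Y u))
    (hYfin : {u : ℤ | Y u ≠ dirac blank}.Finite)
    (Sv : Q → ℝ) (hS : IsProbVec Sv)
    (M : Dir → ℝ)
    (hM : ∀ d, M d = ∑ σ : A, ∑ q : Q,
      (if (δ (σ, q)).2.2 = d then (1 : ℝ) else 0) * Y 0 σ * Sv q)
    (W : A → ℝ)
    (hW : ∀ σ, W σ = ∑ σ' : A, ∑ q : Q,
      (if (δ (σ', q)).1 = σ then (1 : ℝ) else 0) * Y 0 σ' * Sv q)
    (S' : Q → ℝ)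
    (hS' : ∀ q, S' q = ∑ σ : A, ∑ q' : Q,
      (if (δ (σ, q')).2.1 = q then (1 : ℝ) else 0) * Y 0 σ * Sv q')
    (Y' : ℤ → A → ℝ)
    (hY' : ∀ u σ, Y' u σ =
      M Dir.L * ((if u ≠ 1 then (1 : ℝ) else 0) * Y (u - 1) σ
                  + (if u = 1 then (1 : ℝ) else 0) * W σ)
      + M Dir.S * ((if u ≠ 0 then (1 : ℝ) else 0) * Y u σ
                  + (if u = 0 then (1 : ℝ) else 0) * W σ)
      + M Dir.R * ((if u ≠ -1 then (1 : ℝ) else 0) * Y (u + 1) σ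
                  + (if u = -1 then (1 : ℝ) else 0) * W σ)) :
    IsProbVec M ∧ IsProbVec W ∧ IsProbVec S' ∧
    (∀ u, IsProbVec (Y' u)) ∧ {u : ℤ | Y' u ≠ dirac blank}.Finite :=
  stmt12_general blank δ Y hY hYfin Sv hS M hM W hW S' hS' Y' hY'
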